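/- arXiv:2212.14854 — 2 statements merged into one kernel-verified Lean document; each statement's English description precedes it below -/
import Mathlib

section
/- Let I = [a,b] ⊂ ℝ be a segment and let μ be a Borel probability measure supported in I with p_μ(z) ≥ 0 for all z ∈ ℂ. Then for every δ > 0 there exists a constant c = c(δ) > 0 such that p_μ(z) > c for every z ∈ ℂ with |Im z| ≥ δ. -/
open MeasureTheory Complex Set
open scoped ENNReal NNReal

noncomputable def logEnergy (μ : Measure ℂ) : EReal :=
  ((∫⁻ p : ℂ × ℂ, ENNReal.ofReal (Real.log (‖p.1 - p.2‖)) ∂(μ.prod μ) : ℝ≥0∞) : EReal)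
    - ((∫⁻ p : ℂ × ℂ, ENNReal.ofReal (-Real.log (‖p.1 - p.2‖)) ∂(μ.prod μ) : ℝ≥0∞) : EReal)

noncomputable def potential (μ : Measure ℂ) (z : ℂ) : EReal :=
  ((∫⁻ w, ENNReal.ofReal (Real.log (‖w - z‖)) ∂μ : ℝ≥0∞) : EReal)
    - ((∫⁻ w, ENNReal.ofReal (-Real.log (‖w - z‖)) ∂μ : ℝ≥0∞) : EReal)

def SupportedIn (μ : Measure ℂ) (K : Set ℂ) : Prop := μ Kᶜ = 0

noncomputable def logCapacity (K : Set ℂ) : EReal :=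
  sSup (logEnergy '' {μ : Measure ℂ | IsProbabilityMeasure μ ∧ SupportedIn μ K})

def IsEquilibriumMeasure (μ : Measure ℂ) (K : Set ℂ) : Prop :=
  IsProbabilityMeasure μ ∧ SupportedIn μ K ∧ logEnergy μ = logCapacity K

def Irr (K : Set ℂ) : Set (Polynomial ℤ) :=
  {P | P.Monic ∧ Irreducible P ∧ 1 ≤ P.natDegree ∧
    ∀ z ∈ (P.map (Int.castRingHom ℂ)).roots, z ∈ K}

noncomputable def rootMeasure (P : Polynomial ℤ) : Measure ℂ :=
  (P.natDegree : ℝ≥0∞)⁻¹ • ((P.map (Int.castRingHom ℂ)).roots.map Measure.dirac).sum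

noncomputable def Minf (K : Set ℂ) : Set (ProbabilityMeasure ℂ) :=
  ⋂ F ∈ {F : Finset (Polynomial ℤ) | ↑F ⊆ Irr K},
    closure {ν : ProbabilityMeasure ℂ |
      ν.toMeasure ∈ convexHull ℝ≥0 (rootMeasure '' (Irr K \ ↑F))}

def HarmonicOnSet (u : ℂ → ℝ) (U : Set ℂ) : Prop :=
  ∀ z ∈ U, ContDiffAt ℝ 2 u z ∧
    fderiv ℝ (fun w => fderiv ℝ u w 1) z 1
      + fderiv ℝ (fun w => fderiv ℝ u w Complex.I) z Complex.I = 0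

/-! For `x ∈ [a, b]` let `u` be the point of `[a, b]` nearest to `Re z`. If `|Im z| ≥ δ` then
`|x - z|² ≥ (x - u)² + δ²`, while `w₀ = u + iδ/2` has `|x - w₀|² = (x - u)² + δ²/4`; as
`(x - u)² ≤ (b - a)²`, the ratio `|x - z|² / |x - w₀|²` is at least
`κ = ((b - a)² + δ²) / ((b - a)² + δ²/4) > 1`. Integrating the logarithm against `μ` gives
`p_μ(z) ≥ p_μ(w₀) + (log κ) / 2 ≥ (log κ) / 2`. -/

lemma SupportedIn.ae_mem {μ : Measure ℂ} {K : Set ℂ} (hμ : SupportedIn μ K) : ∀ᵐ w ∂μ, w ∈ K :=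
  measure_eq_zero_iff_ae_notMem.mp hμ |>.mono fun _ hw => not_not.mp hw

lemma potential_eq_integral {μ : Measure ℂ} {z : ℂ}
    (hf : Integrable (fun w => Real.log ‖w - z‖) μ) :
    potential μ z = ((∫ w, Real.log ‖w - z‖ ∂μ : ℝ) : EReal) := by
  have hfin : ∀ g : ℂ → ℝ, Integrable g μ → ∫⁻ w, ENNReal.ofReal (g w) ∂μ ≠ ⊤ := fun g hg =>
    ne_top_of_le_ne_top hg.2.ne (lintegral_mono fun w => Real.ofReal_le_enorm (g w))
  rw [integral_eq_lintegral_pos_part_sub_lintegral_neg_part hf, EReal.coe_sub,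
    EReal.coe_ennreal_toReal (hfin _ hf),
    EReal.coe_ennreal_toReal (hfin (fun w => -Real.log ‖w - z‖) hf.neg), potential]

lemma integrable_log_norm_sub_of_isCompact {μ : Measure ℂ} [IsFiniteMeasure μ] {K : Set ℂ}
    (hK : IsCompact K) (hμ : SupportedIn μ K) {z : ℂ} {r : ℝ} (hr : 0 < r)
    (hz : ∀ w ∈ K, r ≤ ‖w - z‖) : Integrable (fun w => Real.log ‖w - z‖) μ := by
  obtain ⟨R, hR⟩ := hK.exists_bound_of_continuousOn (f := fun w => ‖w - z‖) (by fun_prop)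
  refine .of_bound (Measurable.aestronglyMeasurable (by fun_prop))
    (max |Real.log r| |Real.log R|) ?_
  filter_upwards [hμ.ae_mem] with w hw
  have hrw := hz w hw
  exact abs_le_max_abs_abs (Real.log_le_log hr hrw)
    (Real.log_le_log (hr.trans_le hrw) ((le_abs_self _).trans (by simpa using hR w hw)))

lemma integrable_log_norm_sub_of_le_abs_im {μ : Measure ℂ} [IsFiniteMeasure μ] {a b r : ℝ}
    (hμ : SupportedIn μ (ofReal '' Icc a b)) (hr : 0 < r) {z : ℂ} (hz : r ≤ |z.im|) :
    Integrable (fun w => Real.log ‖w - z‖) μ := by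
  refine integrable_log_norm_sub_of_isCompact (isCompact_Icc.image continuous_ofReal) hμ hr ?_
  rintro _ ⟨x, -, rfl⟩
  exact hz.trans (by simpa using abs_im_le_norm ((x : ℂ) - z))

lemma abs_sub_max_min_le {a b x : ℝ} (hx : x ∈ Icc a b) (y : ℝ) :
    |x - max a (min y b)| ≤ |x - y| := by
  grind [abs_le]

lemma log_norm_sub_add_le {L δ x u : ℝ} {z : ℂ} (hδ : 0 < δ) (hL : |x - u| ≤ L)
    (hxz : |x - u| ≤ |x - z.re|) (hz : δ ≤ |z.im|) :
    Real.log ‖(x : ℂ) - (u + δ / 2 * I)‖ + Real.log ((L ^ 2 + δ ^ 2) / (L ^ 2 + δ ^ 2 / 4)) / 2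
      ≤ Real.log ‖(x : ℂ) - z‖ := by
  have hnorm : ∀ v : ℂ, Real.log ‖v‖ = Real.log (v.re ^ 2 + v.im ^ 2) / 2 := fun v => by
    rw [show v.re ^ 2 + v.im ^ 2 = ‖v‖ ^ 2 by rw [Complex.sq_norm, Complex.normSq_apply]; ring,
      Real.log_pow]
    push_cast; ring
  have hs : (x - u) ^ 2 ≤ L ^ 2 := sq_le_sq' (abs_le.mp hL).1 (abs_le.mp hL).2
  have hs' : (x - u) ^ 2 ≤ (x - z.re) ^ 2 := sq_le_sq.mpr hxz
  have hδ' : δ ^ 2 ≤ z.im ^ 2 := sq_le_sq.mpr (by rwa [abs_of_pos hδ])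
  rw [hnorm, hnorm, ← add_div, ← Real.log_mul (by simp; positivity) (by positivity)]
  gcongr ?_ / 2
  refine Real.log_le_log (by simp; positivity) ?_
  simp only [sub_re, sub_im, add_re, add_im, ofReal_re, ofReal_im, mul_re, mul_im, I_re, I_im,
    div_ofNat_re, div_ofNat_im]
  rw [mul_div_assoc', div_le_iff₀ (by positivity)]
  nlinarith [mul_le_mul_of_nonneg_left hs (sq_nonneg δ)]

theorem stmt9_general (a b : ℝ)
    (I : Set ℂ) (hI : I = Complex.ofReal '' Set.Icc a b)
    (μ : Measure ℂ) (hprob : IsProbabilityMeasure μ) (hsupp : SupportedIn μ I)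
    (hpot : ∀ z : ℂ, 0 ≤ potential μ z) :
    ∀ δ : ℝ, 0 < δ → ∃ c : ℝ, 0 < c ∧
      ∀ z : ℂ, δ ≤ |z.im| → ((c : ℝ) : EReal) < potential μ z := by
  intro δ hδ
  subst hI
  set κ := ((b - a) ^ 2 + δ ^ 2) / ((b - a) ^ 2 + δ ^ 2 / 4)
  have hκ : 0 < Real.log κ :=
    Real.log_pos <| (one_lt_div (by positivity)).mpr (by linarith [sq_pos_of_pos hδ])
  refine ⟨Real.log κ / 4, by positivity, fun z hz => ?_⟩
  have hz_int := integrable_log_norm_sub_of_le_abs_im hsupp hδ hz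
  -- comparing with `u` itself instead of `w₀` would run into the junk value `Real.log 0 = 0`
  set w₀ : ℂ := max a (min z.re b) + δ / 2 * Complex.I
  have hw₀_int := integrable_log_norm_sub_of_le_abs_im hsupp (half_pos hδ) (z := w₀)
    (by simp [w₀, abs_of_pos (half_pos hδ)])
  have hcmp : ∀ᵐ w ∂μ, Real.log ‖w - w₀‖ + Real.log κ / 2 ≤ Real.log ‖w - z‖ := by
    filter_upwards [hsupp.ae_mem] with w hw
    obtain ⟨x, hx, rfl⟩ := hw
    exact log_norm_sub_add_le hδ (by grind [abs_le]) (abs_sub_max_min_le hx z.re) hz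
  have hw₀ : 0 ≤ ∫ w, Real.log ‖w - w₀‖ ∂μ := by
    simpa [potential_eq_integral hw₀_int] using hpot w₀
  have hmono : ∫ w, (Real.log ‖w - w₀‖ + Real.log κ / 2) ∂μ ≤ ∫ w, Real.log ‖w - z‖ ∂μ :=
    integral_mono_ae (hw₀_int.add (integrable_const _)) hz_int hcmp
  rw [integral_add hw₀_int (integrable_const _), integral_const, probReal_univ, one_smul] at hmono
  rw [potential_eq_integral hz_int, EReal.coe_lt_coe_iff]
  linarith

theorem stmt9 (a b : ℝ) (hab : a ≤ b)
    (I : Set ℂ) (hI : I = Complex.ofReal '' Set.Icc a b)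
    (μ : Measure ℂ) (hprob : IsProbabilityMeasure μ) (hsupp : SupportedIn μ I)
    (hpot : ∀ z : ℂ, 0 ≤ potential μ z) :
    ∀ δ : ℝ, 0 < δ → ∃ c : ℝ, 0 < c ∧
      ∀ z : ℂ, δ ≤ |z.im| → ((c : ℝ) : EReal) < potential μ z :=
  stmt9_general a b I hI μ hprob hsupp hpot
end

section
/- Let E ⊂ ℂ ≅ ℝ² be a nonempty compact set, and let u₁ and u₂ be bounded real-valued functions that are continuous on the closure of ℂ ∖ E, harmonic on the open set ℂ ∖ E, and agree on the boundary ∂E. Then u₁ = u₂ on all of ℂ ∖ E; in other words, the exterior Dirichlet problem on ℂ ∖ E has at most one bounded solution for given continuous boundary values on ∂E. -/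
open MeasureTheory Complex Set
open scoped ENNReal NNReal

/-!
For `v = u₁ - u₂` (and symmetrically `u₂ - u₁`) it suffices to show `v ≤ 0` off `E`. Fix `z ∉ E`,
`ε > 0` and a boundary point `z₀ ∈ ∂E`. By continuity `v < ε` on `closure Eᶜ` within some distance
`δ` of `z₀`. If `v ≤ M`, then on the bounded open set `Eᶜ ∩ {δ < ‖w - z₀‖ < R}` the function
`ε + M log (‖w - z₀‖ / δ) / log (R / δ)` is a harmonic majorant of `v` on the boundary, so the weak
maximum principle bounds `v z` by its value at `z`. This tends to `ε` as `R → ∞`, which is where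
the two-dimensionality (the logarithm) enters. The weak maximum principle follows from the
second-derivative test applied to `v + σ ‖w‖ ^ 2`, whose Laplacian is positive.
-/

open Set Filter Topology InnerProductSpace Laplacian

theorem IsLocalMax.deriv_deriv_nonpos {φ : ℝ → ℝ} {x : ℝ} (h : IsLocalMax φ x)
    (hc : ContinuousAt φ x) : deriv (deriv φ) x ≤ 0 := by
  by_contra! hpos
  have hmin := isLocalMin_of_deriv_deriv_pos hpos h.deriv_eq_zero hc
  have hconst : φ =ᶠ[𝓝 x] fun _ => φ x := (h.and hmin).mono fun t ht => le_antisymm ht.1 ht.2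
  have hderiv : deriv φ =ᶠ[𝓝 x] fun _ => 0 :=
    hconst.eventuallyEq_nhds.mono fun t ht => by rw [ht.deriv_eq, deriv_const]
  rw [hderiv.deriv_eq, deriv_const] at hpos
  exact hpos.false

theorem fderiv_fderiv_apply {𝕜 E F : Type*} [NontriviallyNormedField 𝕜] [NormedAddCommGroup E]
    [NormedSpace 𝕜 E] [NormedAddCommGroup F] [NormedSpace 𝕜 F] {f : E → F} {z : E}
    (hf : DifferentiableAt 𝕜 (fderiv 𝕜 f) z) (v w : E) :
    fderiv 𝕜 (fun x => fderiv 𝕜 f x v) z w = fderiv 𝕜 (fderiv 𝕜 f) z w v := by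
  rw [fderiv_clm_apply hf (differentiableAt_const v)]
  simp

theorem IsLocalMax.iteratedFDeriv_two_nonpos {E : Type*} [NormedAddCommGroup E]
    [NormedSpace ℝ E] {g : E → ℝ} {p : E} (h : IsLocalMax g p) (hg : ContDiffAt ℝ 2 g p)
    (v : E) : iteratedFDeriv ℝ 2 g p ![v, v] ≤ 0 := by
  have hL : ∀ t : ℝ, HasDerivAt (fun s : ℝ => p + s • v) v t := fun t => by
    simpa using ((hasDerivAt_id t).smul_const v).const_add p
  have hL0 : p + (0 : ℝ) • v = p := by simp
  have hLc : ContinuousAt (fun s : ℝ => p + s • v) 0 := (hL 0).continuousAt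
  have hmax : IsLocalMax (fun t : ℝ => g (p + t • v)) 0 :=
    IsLocalMax.comp_continuous (f := g) (by rwa [hL0]) hLc
  have hderiv : deriv (fun t : ℝ => g (p + t • v)) =ᶠ[𝓝 0]
      fun t => fderiv ℝ g (p + t • v) v := by
    filter_upwards [hLc.eventually (hL0.symm ▸ hg.eventually (by norm_num))] with t ht
    exact ((ht.differentiableAt two_ne_zero).hasFDerivAt.comp_hasDerivAt t (hL t)).deriv
  have hdiff : DifferentiableAt ℝ (fderiv ℝ g) p :=
    (hg.fderiv_right le_rfl).differentiableAt one_ne_zero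
  have hsecond : HasDerivAt (fun t : ℝ => fderiv ℝ g (p + t • v) v)
      (fderiv ℝ (fderiv ℝ g) p v v) 0 := by
    have := (hdiff.clm_apply (differentiableAt_const v)).hasFDerivAt.comp_hasDerivAt_of_eq 0
      (hL 0) hL0.symm
    simpa [fderiv_fderiv_apply hdiff, Function.comp_def] using this
  rw [iteratedFDeriv_two_apply]
  simpa [hderiv.deriv_eq, hsecond.deriv] using
    hmax.deriv_deriv_nonpos (hg.continuousAt.comp_of_eq hLc hL0)

section MaximumPrinciple

variable {E : Type*} [NormedAddCommGroup E] [InnerProductSpace ℝ E] [FiniteDimensional ℝ E]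

theorem IsLocalMax.laplacian_nonpos {g : E → ℝ} {p : E} (h : IsLocalMax g p)
    (hg : ContDiffAt ℝ 2 g p) : Δ g p ≤ 0 := by
  rw [laplacian_eq_iteratedFDeriv_stdOrthonormalBasis]
  exact Finset.sum_nonpos fun i _ => h.iteratedFDeriv_two_nonpos hg _

theorem laplacian_norm_sq (x : E) : Δ (fun y : E => ‖y‖ ^ 2) x = 2 * Module.finrank ℝ E := by
  have hfd : fderiv ℝ (fderiv ℝ fun y : E => ‖y‖ ^ 2) x = 2 • innerSL ℝ := by
    rw [fderiv_norm_sq]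
    exact ((2 : ℕ) • innerSL ℝ (E := E)).fderiv
  have h2 : ∀ v, fderiv ℝ (fderiv ℝ fun y : E => ‖y‖ ^ 2) x v v = 2 * ‖v‖ ^ 2 := fun v => by
    rw [hfd, ← real_inner_self_eq_norm_sq, smul_apply, smul_apply, innerSL_apply_apply]
    norm_num
  simp [laplacian_eq_iteratedFDeriv_stdOrthonormalBasis, iteratedFDeriv_two_apply, h2,
    (stdOrthonormalBasis ℝ E).orthonormal.1, mul_comm]

variable [Nontrivial E] {g : E → ℝ} {U : Set E}

theorem InnerProductSpace.HarmonicOnNhd.exists_mem_frontier_add_norm_sq_le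
    (hU : Bornology.IsBounded U) (hc : ContinuousOn g (closure U)) (hg : HarmonicOnNhd g U)
    {σ : ℝ} (hσ : 0 < σ) {w : E} (hw : w ∈ closure U) :
    ∃ p ∈ frontier U, g w + σ * ‖w‖ ^ 2 ≤ g p + σ * ‖p‖ ^ 2 := by
  set G : E → ℝ := g + σ • fun x => ‖x‖ ^ 2
  have hGc : ContinuousOn G (closure U) := hc.add (by fun_prop)
  obtain ⟨p, hpU, hpmax⟩ := hU.isCompact_closure.exists_isMaxOn ⟨w, hw⟩ hGc
  refine ⟨p, ?_, hpmax hw⟩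
  by_contra hpf
  have hp : p ∈ interior U := by_contra fun h => hpf ⟨hpU, h⟩
  have hharm := hg p (interior_subset hp)
  have hsq : ContDiffAt ℝ 2 (σ • fun x : E => ‖x‖ ^ 2) p :=
    (contDiff_norm_sq ℝ).contDiffAt.const_smul σ
  have hlap : Δ G p = σ * (2 * Module.finrank ℝ E) := by
    rw [hharm.1.laplacian_add hsq, hharm.2.eq_of_nhds,
      laplacian_smul σ (contDiff_norm_sq ℝ).contDiffAt, laplacian_norm_sq]
    simp
  have hmax : IsLocalMax G p :=
    hpmax.isLocalMax (mem_of_superset (isOpen_interior.mem_nhds hp) interior_subset_closure)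
  have hnonpos := hmax.laplacian_nonpos (hharm.1.add hsq)
  have hdim : (0 : ℝ) < Module.finrank ℝ E := by exact_mod_cast Module.finrank_pos
  nlinarith

theorem InnerProductSpace.HarmonicOnNhd.le_of_forall_mem_frontier_le
    (hU : Bornology.IsBounded U) (hc : ContinuousOn g (closure U)) (hg : HarmonicOnNhd g U)
    {b : ℝ} (hb : ∀ x ∈ frontier U, g x ≤ b) {w : E} (hw : w ∈ closure U) : g w ≤ b := by
  obtain ⟨r, hr⟩ := hU.closure.subset_closedBall 0
  have hnorm : ∀ x ∈ closure U, ‖x‖ ^ 2 ≤ r ^ 2 := fun x hx => by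
    have := mem_closedBall_zero_iff.1 (hr hx)
    nlinarith [norm_nonneg x]
  refine le_of_forall_pos_le_add fun ε hε => ?_
  set σ := ε / (r ^ 2 + 1)
  have hσ : 0 < σ := by positivity
  obtain ⟨p, hp, hwp⟩ := hg.exists_mem_frontier_add_norm_sq_le hU hc hσ hw
  have hσr : σ * r ^ 2 ≤ ε := by
    rw [div_mul_eq_mul_div, div_le_iff₀ (by positivity)]
    nlinarith
  nlinarith [hb p hp, hnorm p (frontier_subset_closure hp), sq_nonneg ‖w‖]

end MaximumPrinciple

section Annulus

variable {X : Type*} [TopologicalSpace X] {U : Set X} {f : X → ℝ}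

theorem closure_inter_preimage_Ioo_subset (hf : Continuous f) (U : Set X) (a b : ℝ) :
    closure (U ∩ f ⁻¹' Ioo a b) ⊆ closure U ∩ f ⁻¹' Icc a b :=
  (closure_inter_subset_inter_closure _ _).trans <| inter_subset_inter_right _ <|
    closure_minimal (preimage_mono Ioo_subset_Icc_self) (isClosed_Icc.preimage hf)

theorem IsOpen.frontier_inter_preimage_Ioo_subset (hU : IsOpen U) (hf : Continuous f)
    (a b : ℝ) :
    frontier (U ∩ f ⁻¹' Ioo a b) ⊆ f ⁻¹' Icc a b ∩ (frontier U ∪ U ∩ f ⁻¹' {a, b}) := by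
  intro x hx
  obtain ⟨hxU, hxf⟩ := closure_inter_preimage_Ioo_subset hf U a b (frontier_subset_closure hx)
  have hxΩ : x ∉ U ∩ f ⁻¹' Ioo a b := ((hU.inter (isOpen_Ioo.preimage hf)).frontier_eq ▸ hx).2
  refine ⟨hxf, ?_⟩
  by_cases hx' : x ∈ U
  · exact Or.inr ⟨hx', Icc_sdiff_Ioo_same (hxf.1.trans hxf.2) ▸ ⟨hxf, fun h => hxΩ ⟨hx', h⟩⟩⟩
  · exact Or.inl (hU.frontier_eq ▸ ⟨hxU, hx'⟩)

end Annulus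

theorem harmonicAt_log_norm_sub_div {z₀ z : ℂ} (hz : z ≠ z₀) {δ : ℝ} (hδ : δ ≠ 0) :
    HarmonicAt (fun w => Real.log (‖w - z₀‖ / δ)) z := by
  have hlog : (fun w => Real.log ‖w - z₀‖ - Real.log δ) =ᶠ[𝓝 z]
      fun w => Real.log (‖w - z₀‖ / δ) := by
    filter_upwards [isOpen_ne.mem_nhds hz] with w hw
    rw [Real.log_div (norm_ne_zero_iff.2 (sub_ne_zero.2 hw)) hδ]
  refine (harmonicAt_congr_nhds hlog).1 ?_
  exact ((analyticAt_id.sub analyticAt_const).harmonicAt_log_norm (sub_ne_zero.2 hz)).sub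
    (harmonicAt_const _)

theorem laplacian_eq_fderiv_fderiv_apply {F : Type*} [NormedAddCommGroup F] [NormedSpace ℝ F]
    {f : ℂ → F} {z : ℂ} (hf : DifferentiableAt ℝ (fderiv ℝ f) z) :
    Δ f z = fderiv ℝ (fun w => fderiv ℝ f w 1) z 1
      + fderiv ℝ (fun w => fderiv ℝ f w Complex.I) z Complex.I := by
  simp [laplacian_eq_iteratedFDeriv_complexPlane, iteratedFDeriv_two_apply,
    fderiv_fderiv_apply hf]

theorem HarmonicOnSet.harmonicOnNhd {u : ℂ → ℝ} {U : Set ℂ} (hU : IsOpen U)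
    (h : HarmonicOnSet u U) : HarmonicOnNhd u U := fun z hz =>
  ⟨(h z hz).1, eventually_of_mem (hU.mem_nhds hz) fun w hw => by
    rw [Pi.zero_apply, laplacian_eq_fderiv_fderiv_apply
      (((h w hw).1.fderiv_right le_rfl).differentiableAt one_ne_zero), (h w hw).2]⟩

section Exterior

variable {K : Set ℂ} {v : ℂ → ℝ}

theorem InnerProductSpace.HarmonicOnNhd.le_log_barrier (hK : IsClosed K)
    (hc : ContinuousOn v (closure Kᶜ)) (hv : HarmonicOnNhd v Kᶜ)
    (hfr : ∀ x ∈ frontier K, v x ≤ 0) {z₀ : ℂ} {δ R M ε : ℝ} (hδ : 0 < δ) (hδR : δ < R)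
    (hM : 0 ≤ M) (hε : 0 ≤ ε) (hinner : ∀ w ∈ Kᶜ, ‖w - z₀‖ = δ → v w ≤ ε)
    (houter : ∀ w ∈ Kᶜ, ‖w - z₀‖ = R → v w ≤ M) {z : ℂ} (hz : z ∈ Kᶜ)
    (hzδ : δ < ‖z - z₀‖) (hzR : ‖z - z₀‖ < R) :
    v z ≤ ε + M / Real.log (R / δ) * Real.log (‖z - z₀‖ / δ) := by
  have hlogR : 0 < Real.log (R / δ) := Real.log_pos ((one_lt_div hδ).2 hδR)
  set m := M / Real.log (R / δ)
  have hm : 0 ≤ m := div_nonneg hM hlogR.le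
  have hr : Continuous fun w : ℂ => ‖w - z₀‖ := by fun_prop
  set Ω := Kᶜ ∩ (fun w => ‖w - z₀‖) ⁻¹' Ioo δ R
  have hΩcl := closure_inter_preimage_Ioo_subset hr Kᶜ δ R
  set φ : ℂ → ℝ := fun w => Real.log (‖w - z₀‖ / δ)
  have hφ : ∀ x, δ ≤ ‖x - z₀‖ → 0 ≤ φ x := fun x hx =>
    Real.log_nonneg ((one_le_div hδ).2 hx)
  have hg : HarmonicOnNhd (v - m • φ) Ω := fun w hw =>
    (hv w hw.1).sub (harmonicAt_log_norm_sub_div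
      (fun h => by have : δ < ‖w - z₀‖ := hw.2.1; rw [h, sub_self, norm_zero] at this; linarith)
      hδ.ne').const_smul
  have hgc : ContinuousOn (v - m • φ) (closure Ω) := by
    refine (hc.mono fun x hx => (hΩcl hx).1).sub (ContinuousOn.const_smul ?_ m)
    exact (hr.continuousOn.div_const δ).log fun x hx =>
      (div_pos (hδ.trans_le (hΩcl hx).2.1) hδ).ne'
  have hbarrier : ∀ x ∈ frontier Ω, (v - m • φ) x ≤ ε := by
    intro x hx
    suffices v x ≤ ε + m * φ x by
      simp only [Pi.sub_apply, Pi.smul_apply, smul_eq_mul]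
      linarith
    obtain ⟨⟨hxδ, -⟩, hxK | ⟨hxK, h | h⟩⟩ :=
      hK.isOpen_compl.frontier_inter_preimage_Ioo_subset hr δ R hx
    · nlinarith [hfr x (frontier_compl K ▸ hxK), mul_nonneg hm (hφ x hxδ)]
    · have hφx : φ x = 0 := by simp [φ, show ‖x - z₀‖ = δ from h, div_self hδ.ne']
      simpa [hφx] using hinner x hxK h
    · have hφx : m * φ x = M := by
        simp only [φ, show ‖x - z₀‖ = R from h, m]
        exact div_mul_cancel₀ M hlogR.ne'
      linarith [houter x hxK h]
  have hmp := hg.le_of_forall_mem_frontier_le (Metric.isBounded_ball (x := z₀) (r := R).subset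
    fun w hw => by simpa [dist_eq_norm] using hw.2.2) hgc hbarrier (subset_closure ⟨hz, hzδ, hzR⟩)
  simp only [Pi.sub_apply, Pi.smul_apply, smul_eq_mul] at hmp
  linarith

theorem InnerProductSpace.HarmonicOnNhd.nonpos_of_forall_mem_frontier_nonpos (hK : IsClosed K)
    (hne : K.Nonempty) {M : ℝ} (hM : ∀ w ∈ Kᶜ, v w ≤ M) (hc : ContinuousOn v (closure Kᶜ))
    (hv : HarmonicOnNhd v Kᶜ) (hfr : ∀ x ∈ frontier K, v x ≤ 0) {z : ℂ} (hz : z ∈ Kᶜ) :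
    v z ≤ 0 := by
  obtain ⟨z₀, hz₀⟩ : (frontier K).Nonempty :=
    nonempty_frontier_iff.2 ⟨hne, fun h => hz (h ▸ mem_univ z)⟩
  have hzz₀ : 0 < ‖z - z₀‖ :=
    norm_pos_iff.2 (sub_ne_zero.2 fun h => hz (h ▸ hK.frontier_subset hz₀))
  refine le_of_forall_pos_le_add fun ε hε => ?_
  obtain ⟨δ₀, hδ₀, hnear⟩ : ∃ δ₀ > 0, Metric.ball z₀ δ₀ ∩ closure Kᶜ ⊆ {w | v w < ε} :=
    Metric.mem_nhdsWithin_iff.1 <| (hc z₀ (frontier_subset_closure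
      (frontier_compl K ▸ hz₀))).eventually (gt_mem_nhds ((hfr z₀ hz₀).trans_lt hε))
  set δ := min (δ₀ / 2) (‖z - z₀‖ / 2)
  have hδ : 0 < δ := by positivity
  have hδz : δ < ‖z - z₀‖ := (min_le_right _ _).trans_lt (by linarith)
  have hδδ₀ : δ < δ₀ := (min_le_left _ _).trans_lt (by linarith)
  have hbound : ∀ R > ‖z - z₀‖,
      v z ≤ ε + max M 0 / Real.log (R / δ) * Real.log (‖z - z₀‖ / δ) := fun R hR =>
    hv.le_log_barrier hK hc hfr hδ (hδz.trans hR) (le_max_right M 0) hε.le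
      (fun w hw hwδ => (hnear ⟨by rwa [Metric.mem_ball, dist_eq_norm, hwδ],
        subset_closure hw⟩).out.le)
      (fun w hw _ => (hM w hw).trans (le_max_left M 0)) hz hδz hR
  have hlim : Tendsto (fun R => ε + max M 0 / Real.log (R / δ) * Real.log (‖z - z₀‖ / δ))
      atTop (𝓝 ε) := by
    simpa using ((tendsto_const_nhds.div_atTop (Real.tendsto_log_atTop.comp
      (tendsto_id.atTop_div_const hδ))).mul_const _).const_add ε
  simpa using ge_of_tendsto hlim ((eventually_gt_atTop _).mono hbound)

end Exterior

theorem stmt13 (E : Set ℂ) (hne : E.Nonempty) (hEc : IsCompact E)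
    (u₁ u₂ : ℂ → ℝ)
    (hb₁ : ∃ M : ℝ, ∀ z : ℂ, |u₁ z| ≤ M) (hb₂ : ∃ M : ℝ, ∀ z : ℂ, |u₂ z| ≤ M)
    (hc₁ : ContinuousOn u₁ (closure Eᶜ)) (hc₂ : ContinuousOn u₂ (closure Eᶜ))
    (hh₁ : HarmonicOnSet u₁ Eᶜ) (hh₂ : HarmonicOnSet u₂ Eᶜ)
    (heq : Set.EqOn u₁ u₂ (frontier E)) :
    Set.EqOn u₁ u₂ Eᶜ := by
  obtain ⟨M₁, hM₁⟩ := hb₁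
  obtain ⟨M₂, hM₂⟩ := hb₂
  have hE := hEc.isClosed
  have h₁ := hh₁.harmonicOnNhd hE.isOpen_compl
  have h₂ := hh₂.harmonicOnNhd hE.isOpen_compl
  have hbound : ∀ {f g : ℂ → ℝ} {a b : ℝ}, (∀ z, |f z| ≤ a) → (∀ z, |g z| ≤ b) →
      ∀ w ∈ Eᶜ, (f - g) w ≤ a + b := fun hf hg w _ =>
    (sub_le_sub (abs_le.1 (hf w)).2 (abs_le.1 (hg w)).1).trans_eq (by ring)
  intro z hz
  refine le_antisymm ?_ ?_ <;> rw [← sub_nonpos]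
  · exact (h₁.sub h₂).nonpos_of_forall_mem_frontier_nonpos hE hne (hbound hM₁ hM₂)
      (hc₁.sub hc₂) (fun x hx => (sub_eq_zero.2 (heq hx)).le) hz
  · exact (h₂.sub h₁).nonpos_of_forall_mem_frontier_nonpos hE hne (hbound hM₂ hM₁)
      (hc₂.sub hc₁) (fun x hx => (sub_eq_zero.2 (heq hx).symm).le) hz
end
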